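/- arXiv:1403.1772 — 5 statements merged into one kernel-verified Lean document; each statement's English description precedes it below -/
import Mathlib

section
/- Let n ≥ 1 and let (v_1, …, v_{2n}) be the standard orthonormal basis of ℂ^{2n}, with indices read modulo 2n (so v_{k+2n} = v_k for all integers k). For 1 ≤ i, j ≤ n let P_{ij} denote the orthogonal projection of ℂ^{2n} onto the one-dimensional subspace spanned by v_{2(i−j)+1} + v_{2(j−i)+2}, and let P denote the orthogonal projection onto the one-dimensional subspace spanned by v_1 + v_2 + ⋯ + v_{2n}. Then: each P_{ij} is an orthogonal projection; P_{ik}·P_{il} = 0 and P_{ki}·P_{li} = 0 whenever k ≠ l; and Σ_{k=1}^n P_{ik}·P = P as well as Σ_{k=1}^n P_{ki}·P = P for every i ∈ {1,…,n}. (That is, the family (P_{ij}) together with P satisfies the defining relations of the quantum semigroup B_s(n) inside the C*-algebra of operators on ℂ^{2n}.) -/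
/-
Each `P_{ij}` projects onto `e_a + e_b` for two coordinates `a, b` of `ℂ^{2n}`. In row `i`
(resp. column `i`) the (0-based) coordinate pairs are `{2x, 1 - 2x} mod 2n` with `x = i - k`
(resp. `k - i`) running over `n` values distinct mod `n`: parity separates the two members of a
pair, and the distinctness separates different pairs, so the `2n` coordinates are all different
and exhaust `ℤ/2n`. Hence the vectors of a row (or column) are pairwise orthogonal, which gives
the orthogonality relations, and they sum to `v_1 + ⋯ + v_{2n}`. For pairwise orthogonal `w_k`
with sum `v`, the projection onto `w_k` sends `v` to `w_k`, so `∑ P_{w_k} P_v = P_v`.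
-/

noncomputable section

instance instNeZeroTwoMul (n : ℕ) [NeZero n] : NeZero (2 * n) :=
  ⟨by have := NeZero.ne n; omega⟩

/-- The orthogonal projection onto the line spanned by `w`, given by the formula
`x ↦ (⟨w, x⟩ / ‖w‖²) • w`. -/
noncomputable def lineProj {E : Type*} [NormedAddCommGroup E] [InnerProductSpace ℂ E]
    (w : E) : E →L[ℂ] E :=
  (((‖w‖ : ℂ)) ^ 2)⁻¹ • (innerSL ℂ w).smulRight w

open Fin.IntCast in
/-- The basis vector `v_k` of `ℂ^{2n}`, `1`-indexed, with indices read modulo `2n`. -/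
noncomputable def vv (n : ℕ) [NeZero n] (k : ℤ) : EuclideanSpace ℂ (Fin (2 * n)) :=
  EuclideanSpace.single ((k - 1 : ℤ) : Fin (2 * n)) 1

/-- `P_{ij}`, the orthogonal projection onto the span of `v_{2(i-j)+1} + v_{2(j-i)+2}`.
Here `i j : Fin n` stand for the (1-indexed) indices `i+1, j+1`; the differences agree. -/
noncomputable def Pmat (n : ℕ) [NeZero n] (i j : Fin n) :
    EuclideanSpace ℂ (Fin (2 * n)) →L[ℂ] EuclideanSpace ℂ (Fin (2 * n)) :=
  lineProj (vv n (2 * ((i : ℤ) - (j : ℤ)) + 1) + vv n (2 * ((j : ℤ) - (i : ℤ)) + 2))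

/-- `P`, the orthogonal projection onto the span of `v_1 + v_2 + ⋯ + v_{2n}`. -/
noncomputable def Pinv (n : ℕ) [NeZero n] :
    EuclideanSpace ℂ (Fin (2 * n)) →L[ℂ] EuclideanSpace ℂ (Fin (2 * n)) :=
  lineProj (∑ k : Fin (2 * n), vv n ((k : ℤ) + 1))

open scoped InnerProductSpace

section Projections

variable {𝕜 E : Type*} [RCLike 𝕜] [NormedAddCommGroup E] [InnerProductSpace 𝕜 E]

theorem Submodule.starProjection_singleton_eq_self_of_inner_eq {w v : E}
    (h : ⟪v, w⟫_𝕜 = ⟪w, w⟫_𝕜) : (𝕜 ∙ w).starProjection v = w := by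
  refine eq_starProjection_of_mem_of_inner_eq_zero (mem_span_singleton_self w) fun u hu => ?_
  obtain ⟨c, rfl⟩ := mem_span_singleton.1 hu
  rw [inner_smul_right, inner_sub_left, h, sub_self, mul_zero]

theorem Submodule.sum_starProjection_singleton_mul {ι : Type*} [Fintype ι] {w : ι → E}
    (hw : Pairwise fun k l => ⟪w k, w l⟫_𝕜 = 0) :
    ∑ k, (𝕜 ∙ w k).starProjection * (𝕜 ∙ ∑ k, w k).starProjection =
      (𝕜 ∙ ∑ k, w k).starProjection := by
  classical
  have hproj (k : ι) : (𝕜 ∙ w k).starProjection (∑ l, w l) = w k := by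
    refine starProjection_singleton_eq_self_of_inner_eq ?_
    rw [sum_inner, Finset.sum_eq_single k (fun l _ hlk => hw hlk) (by simp)]
  ext x
  obtain ⟨c, hc⟩ := Submodule.mem_span_singleton.1
    ((𝕜 ∙ ∑ k, w k).starProjection_apply_mem x)
  simp only [sum_apply, mul_apply_eq_comp, ← hc, map_smul, hproj, ← Finset.smul_sum]

end Projections

theorem lineProj_eq_starProjection {E : Type*} [NormedAddCommGroup E] [InnerProductSpace ℂ E]
    (w : E) : lineProj w = (ℂ ∙ w).starProjection := by
  ext x
  rw [Submodule.starProjection_singleton, lineProj, smul_apply,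
    ContinuousLinearMap.smulRight_apply, innerSL_apply_apply, smul_smul, div_eq_inv_mul]
  push_cast
  rfl

section PairSums

variable {𝕜 E κ : Type*} [RCLike 𝕜] [NormedAddCommGroup E] [InnerProductSpace 𝕜 E]

def pairSum (f : κ ⊕ κ → E) (k : κ) : E := f (.inl k) + f (.inr k)

theorem Orthonormal.pairwise_inner_pairSum {f : κ ⊕ κ → E} (hf : Orthonormal 𝕜 f) :
    Pairwise fun k l => ⟪pairSum f k, pairSum f l⟫_𝕜 = 0 := by
  intro k l hkl
  simp [pairSum, inner_add_left, inner_add_right, hf.inner_eq_zero, hkl]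

theorem sum_pairSum [Fintype κ] (f : κ ⊕ κ → E) : ∑ k, pairSum f k = ∑ a, f a := by
  simp only [pairSum, Finset.sum_add_distrib, Fintype.sum_sum_type]

end PairSums

open Fin.IntCast Fin.CommRing in
theorem Fin.intCast_eq_intCast_iff_dvd_sub {m : ℕ} [NeZero m] (a b : ℤ) :
    (a : Fin m) = b ↔ (m : ℤ) ∣ b - a := by
  rw [CharP.intCast_eq_intCast (Fin m) m, Int.modEq_iff_dvd]

theorem Fin.eq_of_natCast_dvd_sub {n : ℕ} {k l : Fin n} (h : (n : ℤ) ∣ (k : ℤ) - l) : k = l := by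
  have := Int.eq_zero_of_abs_lt_dvd h (abs_lt.2 ⟨by omega, by omega⟩)
  omega

section Indices

open Fin.IntCast

variable (n : ℕ) [NeZero n]

def evenOddIndex (x : Fin n → ℤ) : Fin n ⊕ Fin n → Fin (2 * n) :=
  Sum.elim (fun k => ((2 * x k : ℤ) : Fin (2 * n))) fun k => ((1 - 2 * x k : ℤ) : Fin (2 * n))

variable {n}

theorem evenOddIndex_injective {x : Fin n → ℤ} (hx : ∀ k l, (n : ℤ) ∣ x k - x l → k = l) :
    Function.Injective (evenOddIndex n x) := by
  rintro (k | k) (l | l) h <;>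
    simp only [evenOddIndex, Sum.elim_inl, Sum.elim_inr, Fin.intCast_eq_intCast_iff_dvd_sub,
      Nat.cast_mul, Nat.cast_ofNat] at h
  · rw [← mul_sub, mul_dvd_mul_iff_left two_ne_zero] at h
    rw [hx l k h]
  · have := (dvd_mul_right 2 (n : ℤ)).trans h
    omega
  · have := (dvd_mul_right 2 (n : ℤ)).trans h
    omega
  · rw [sub_sub_sub_cancel_left, ← mul_sub, mul_dvd_mul_iff_left two_ne_zero] at h
    rw [hx k l h]

theorem evenOddIndex_bijective {x : Fin n → ℤ} (hx : ∀ k l, (n : ℤ) ∣ x k - x l → k = l) :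
    Function.Bijective (evenOddIndex n x) :=
  (Fintype.bijective_iff_injective_and_card _).2 ⟨evenOddIndex_injective hx, by simp [two_mul]⟩

end Indices

section Operators

variable {n : ℕ} [NeZero n]

variable (n) in
def pairProj (x : Fin n → ℤ) (k : Fin n) :
    EuclideanSpace ℂ (Fin (2 * n)) →L[ℂ] EuclideanSpace ℂ (Fin (2 * n)) :=
  lineProj (pairSum (fun a => EuclideanSpace.single (evenOddIndex n x a) (1 : ℂ)) k)

theorem Pmat_eq_pairProj {i j : Fin n} {x : Fin n → ℤ} {k : Fin n} (h : x k = i - j) :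
    Pmat n i j = pairProj n x k := by
  simp only [Pmat, pairProj, vv, pairSum, evenOddIndex, Sum.elim_inl, Sum.elim_inr, h]
  congr 4 <;> ring

open Fin.CommRing in
theorem Pinv_eq_lineProj_sum_single :
    Pinv n = lineProj (∑ j : Fin (2 * n), EuclideanSpace.single j (1 : ℂ)) := by
  simp only [Pinv, vv, add_sub_cancel_right, Int.cast_natCast, Fin.cast_val_eq_self]

theorem orthonormal_single_evenOddIndex {x : Fin n → ℤ}
    (hx : ∀ k l, (n : ℤ) ∣ x k - x l → k = l) :
    Orthonormal ℂ fun a => EuclideanSpace.single (evenOddIndex n x a) (1 : ℂ) :=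
  EuclideanSpace.orthonormal_single.comp _ (evenOddIndex_injective hx)

theorem pairProj_mul_pairProj {x : Fin n → ℤ} (hx : ∀ k l, (n : ℤ) ∣ x k - x l → k = l)
    {k l : Fin n} (hkl : k ≠ l) : pairProj n x k * pairProj n x l = 0 := by
  rw [pairProj, pairProj, lineProj_eq_starProjection, lineProj_eq_starProjection]
  refine Submodule.IsOrtho.starProjection_comp_starProjection (Submodule.isOrtho_span.2 ?_)
  rintro _ rfl _ rfl
  exact (orthonormal_single_evenOddIndex hx).pairwise_inner_pairSum hkl

theorem sum_pairProj_mul_Pinv {x : Fin n → ℤ} (hx : ∀ k l, (n : ℤ) ∣ x k - x l → k = l) :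
    ∑ k, pairProj n x k * Pinv n = Pinv n := by
  have hsum : ∑ k, pairSum (fun a => EuclideanSpace.single (evenOddIndex n x a) (1 : ℂ)) k =
      ∑ j, EuclideanSpace.single j (1 : ℂ) := by
    rw [sum_pairSum]
    exact (evenOddIndex_bijective hx).sum_comp fun j => EuclideanSpace.single j (1 : ℂ)
  simp only [pairProj, Pinv_eq_lineProj_sum_single, ← hsum, lineProj_eq_starProjection]
  exact Submodule.sum_starProjection_singleton_mul
    (orthonormal_single_evenOddIndex hx).pairwise_inner_pairSum

end Operators

/-- The family `(P_{ij})` together with `P` satisfies the defining relations of the quantum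
semigroup `B_s(n)` inside the operators on `ℂ^{2n}`. -/
theorem stmt0 (n : ℕ) [NeZero n] :
    (∀ i j : Fin n, star (Pmat n i j) = Pmat n i j ∧ Pmat n i j * Pmat n i j = Pmat n i j) ∧
    (∀ i k l : Fin n, k ≠ l → Pmat n i k * Pmat n i l = 0) ∧
    (∀ i k l : Fin n, k ≠ l → Pmat n k i * Pmat n l i = 0) ∧
    (∀ i : Fin n, ∑ k : Fin n, Pmat n i k * Pinv n = Pinv n) ∧
    (∀ i : Fin n, ∑ k : Fin n, Pmat n k i * Pinv n = Pinv n) := by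
  have hrow (i k : Fin n) : Pmat n i k = pairProj n (fun k => (i : ℤ) - k) k :=
    Pmat_eq_pairProj rfl
  have hcol (i k : Fin n) : Pmat n k i = pairProj n (fun k => (k : ℤ) - i) k :=
    Pmat_eq_pairProj rfl
  have hrow_inj (i k l : Fin n) (h : (n : ℤ) ∣ ((i : ℤ) - k) - (i - l)) : k = l :=
    (Fin.eq_of_natCast_dvd_sub (by rwa [sub_sub_sub_cancel_left] at h)).symm
  have hcol_inj (i k l : Fin n) (h : (n : ℤ) ∣ ((k : ℤ) - i) - (l - i)) : k = l :=
    Fin.eq_of_natCast_dvd_sub (by rwa [sub_sub_sub_cancel_right] at h)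
  refine ⟨fun i j => ?_, fun i k l hkl => ?_, fun i k l hkl => ?_, fun i => ?_, fun i => ?_⟩
  · have hP : IsStarProjection (Pmat n i j) := by
      rw [Pmat, lineProj_eq_starProjection]
      exact isStarProjection_starProjection
    exact ⟨hP.isSelfAdjoint.star_eq, hP.isIdempotentElem.eq⟩
  · rw [hrow, hrow]
    exact pairProj_mul_pairProj (hrow_inj i) hkl
  · rw [hcol, hcol]
    exact pairProj_mul_pairProj (hcol_inj i) hkl
  · simp only [hrow]
    exact sum_pairProj_mul_Pinv (hrow_inj i)
  · simp only [hcol]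
    exact sum_pairProj_mul_Pinv (hcol_inj i)

end
end

section
/- Let R be a ring, n ≥ 1, and let u : {1,…,n}×{1,…,n} → R satisfy u_{ik}·u_{il} = 0 and u_{ki}·u_{li} = 0 whenever k ≠ l. Let (i₁,…,i_k) and (j₁,…,j_k) be two tuples in {1,…,n} which do NOT have the same run structure, i.e. there exists q ∈ {1,…,k−1} such that exactly one of the equalities i_q = i_{q+1} and j_q = j_{q+1} holds. Then u_{j₁i₁}·u_{j₂i₂}⋯u_{j_k i_k} = 0. -/
theorem List.prod_eq_zero_of_mul_getElem_succ_eq_zero {M : Type*} [MonoidWithZero M] :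
    ∀ {l : List M} {q : ℕ} (hq : q + 1 < l.length), l[q] * l[q + 1] = 0 → l.prod = 0
  | a :: b :: _, 0, _, h => by
    rw [List.prod_cons, List.prod_cons, ← mul_assoc, show a * b = 0 from h, zero_mul]
  | _ :: l, q + 1, hq, h => by
    rw [List.prod_cons, prod_eq_zero_of_mul_getElem_succ_eq_zero (l := l) (by simpa using hq) h,
      mul_zero]

theorem mul_eq_zero_of_xor_eq {R : Type*} [Mul R] [Zero R] {ι : Type*} (u : ι → ι → R)
    (hrow : ∀ i k l : ι, k ≠ l → u i k * u i l = 0)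
    (hcol : ∀ i k l : ι, k ≠ l → u k i * u l i = 0)
    {a a' b b' : ι} (h : Xor (a = a') (b = b')) : u b a * u b' a' = 0 := by
  rcases h with ⟨rfl, hb⟩ | ⟨rfl, ha⟩
  · exact hcol a b b' hb
  · exact hrow b a a' ha

theorem stmt3_general {R : Type*} [Ring R] (n : ℕ)
    (u : Fin n → Fin n → R)
    (hrow : ∀ i k l : Fin n, k ≠ l → u i k * u i l = 0)
    (hcol : ∀ i k l : Fin n, k ≠ l → u k i * u l i = 0)
    (k : ℕ) (i j : Fin k → Fin n)
    (hdiff : ∃ q : ℕ, ∃ hq : q + 1 < k,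
      Xor' (i ⟨q, Nat.lt_of_succ_lt hq⟩ = i ⟨q + 1, hq⟩)
           (j ⟨q, Nat.lt_of_succ_lt hq⟩ = j ⟨q + 1, hq⟩)) :
    (List.ofFn fun t : Fin k => u (j t) (i t)).prod = 0 := by
  obtain ⟨q, hq, hxor⟩ := hdiff
  refine List.prod_eq_zero_of_mul_getElem_succ_eq_zero (by simpa using hq) ?_
  simpa only [List.getElem_ofFn] using mul_eq_zero_of_xor_eq u hrow hcol hxor

/-- If the `u_{ij}` satisfy the row and column orthogonality relations and the tuples
`(i₁,…,i_k)` and `(j₁,…,j_k)` do not have the same run structure (there is a `q` such that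
exactly one of `i_q = i_{q+1}` and `j_q = j_{q+1}` holds), then
`u_{j₁i₁}·u_{j₂i₂}⋯u_{j_k i_k} = 0`. -/
theorem stmt3 {R : Type*} [Ring R] (n : ℕ) (hn : 1 ≤ n)
    (u : Fin n → Fin n → R)
    (hrow : ∀ i k l : Fin n, k ≠ l → u i k * u i l = 0)
    (hcol : ∀ i k l : Fin n, k ≠ l → u k i * u l i = 0)
    (k : ℕ) (i j : Fin k → Fin n)
    (hdiff : ∃ q : ℕ, ∃ hq : q + 1 < k,
      Xor' (i ⟨q, Nat.lt_of_succ_lt hq⟩ = i ⟨q + 1, hq⟩)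
           (j ⟨q, Nat.lt_of_succ_lt hq⟩ = j ⟨q + 1, hq⟩)) :
    (List.ofFn fun t : Fin k => u (j t) (i t)).prod = 0 :=
  stmt3_general n u hrow hcol k i j hdiff
end

section
/- Let (A, B, E) be an operator-valued probability space with A unital, and let (x_i)_{i=1,…,n} be a family in A which is identically distributed and boolean independent over B with respect to E. If two tuples (i₁,…,i_k) and (j₁,…,j_k) in {1,…,n} have the same run structure, then for all b₁,…,b_{k−1} ∈ B ∪ {1}: E[x_{i₁}·b₁·x_{i₂}·b₂⋯b_{k−1}·x_{i_k}] = E[x_{j₁}·b₁·x_{j₂}·b₂⋯b_{k−1}·x_{j_k}]. -/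
/-!
Cut the word `x_{i₀} b₁ x_{i₁} ⋯ b_k x_{i_k}` into its maximal runs of equal indices. A run with
coefficients `c₁, …, c_r` is the value at `x_i` of the monomial `c₁ X c₂ X ⋯ c_r X 1 ∈ B⟨X⟩₀`, and
consecutive runs carry different indices, so boolean independence factors the expectation into the
product of the expectations of the runs. By identical distribution each factor depends only on the
coefficients of its run, and the list of these coefficient lists is determined by the `b_t` and
the run structure alone.
-/

/-- Evaluation at `x` of the `B`-monomial `b₀ X b₁ X ⋯ X b_m` encoded by the list
`[b₀, b₁, …, b_m]`: it is `b₀ * x * b₁ * x * ⋯ * x * b_m`. -/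
def monEval {A : Type*} [Mul A] (x : A) : List A → A
  | [] => x
  | [b] => b
  | b :: c :: rest => b * x * monEval x (c :: rest)

/-- Evaluation at `x` of a `B`-polynomial, encoded as a formal linear combination
(a list of coefficient–monomial pairs). -/
def polyEval {A : Type*} [Ring A] [Algebra ℂ A] (x : A) (p : List (ℂ × List A)) : A :=
  (p.map fun q => q.1 • monEval x q.2).sum

/-- `p` encodes an element of `B⟨X⟩₀`: each monomial `b₀ X b₁ X ⋯ X b_m` has `m ≥ 1`
(i.e. the coefficient list has length ≥ 2) and each `b_t` lies in `B ∪ ℂ·1`. -/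
def IsPoly₀ {A : Type*} [Ring A] [Algebra ℂ A] (B : NonUnitalSubalgebra ℂ A)
    (p : List (ℂ × List A)) : Prop :=
  ∀ q ∈ p, 2 ≤ q.2.length ∧ ∀ b ∈ q.2, b ∈ B ∨ ∃ lam : ℂ, b = lam • (1 : A)

/-- The family `x` is identically distributed with respect to `E` over `B`. -/
def IdentDistrib' {A : Type*} [Ring A] [Algebra ℂ A] (B : NonUnitalSubalgebra ℂ A)
    (E : A →ₗ[ℂ] A) {ι : Type*} (x : ι → A) : Prop :=
  ∀ (i j : ι) (p : List (ℂ × List A)), IsPoly₀ B p →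
    E (polyEval (x i) p) = E (polyEval (x j) p)

/-- The family `x` is boolean independent over `B` with respect to `E`:
`E[p₁(x_{i₁})⋯p_k(x_{i_k})] = E[p₁(x_{i₁})]⋯E[p_k(x_{i_k})]` whenever consecutive indices
are distinct and the `p_t` are `B`-polynomials without constant term. -/
def BoolIndep {A : Type*} [Ring A] [Algebra ℂ A] (B : NonUnitalSubalgebra ℂ A)
    (E : A →ₗ[ℂ] A) {ι : Type*} (x : ι → A) : Prop :=
  ∀ (k : ℕ) (idx : Fin (k + 1) → ι),
    (∀ t : Fin k, idx t.castSucc ≠ idx t.succ) →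
    ∀ p : Fin (k + 1) → List (ℂ × List A), (∀ t, IsPoly₀ B (p t)) →
      E ((List.ofFn fun t => polyEval (x (idx t)) (p t)).prod) =
        (List.ofFn fun t => E (polyEval (x (idx t)) (p t))).prod

section RunStructure

variable {ι : Type*}

def SameRunStructure : List ι → List ι → Prop
  | [], [] => True
  | [_], [_] => True
  | i :: i' :: l, j :: j' :: l' => (i = i' ↔ j = j') ∧ SameRunStructure (i' :: l) (j' :: l')
  | _, _ => False

theorem sameRunStructure_ofFn {k : ℕ} (i j : Fin (k + 1) → ι)
    (h : ∀ t : Fin k, (i t.castSucc = i t.succ ↔ j t.castSucc = j t.succ)) :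
    SameRunStructure (List.ofFn i) (List.ofFn j) := by
  induction k with
  | zero => simp [SameRunStructure]
  | succ k ih =>
    have htail := ih (fun t => i t.succ) (fun t => j t.succ) fun t => h t.succ
    simp only [List.ofFn_succ] at htail ⊢
    exact ⟨h 0, htail⟩

end RunStructure

section Runs

variable {A ι : Type*} [DecidableEq ι]

def consRun (b : A) (i : ι) : List (ι × List A) → List (ι × List A)
  | [] => [(i, [b])]
  | (j, cs) :: rs => if i = j then (i, b :: cs) :: rs else (i, [b]) :: (j, cs) :: rs

/-- The maximal runs of equal consecutive indices of `w`, each recorded as its index and the list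
of its coefficients. -/
def runs (w : List (A × ι)) : List (ι × List A) :=
  w.foldr (fun p => consRun p.1 p.2) []

@[simp]
theorem runs_nil : runs ([] : List (A × ι)) = [] := rfl

@[simp]
theorem runs_cons (b : A) (i : ι) (w : List (A × ι)) :
    runs ((b, i) :: w) = consRun b i (runs w) := rfl

theorem exists_consRun_eq_cons (b : A) (i : ι) (rs : List (ι × List A)) :
    ∃ cs rs', consRun b i rs = (i, cs) :: rs' := by
  rcases rs with _ | ⟨⟨j, cs⟩, rs⟩
  · exact ⟨_, _, rfl⟩
  · by_cases h : i = j <;> simp [consRun, h]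

theorem runs_ne_nil {w : List (A × ι)} (hw : w ≠ []) : runs w ≠ [] := by
  obtain ⟨⟨b, i⟩, w, rfl⟩ := List.exists_cons_of_ne_nil hw
  obtain ⟨cs, rs, h⟩ := exists_consRun_eq_cons b i (runs w)
  simp [h]

theorem flatten_map_snd_runs (w : List (A × ι)) :
    ((runs w).map Prod.snd).flatten = w.map Prod.fst := by
  induction w with
  | nil => rfl
  | cons p w ih =>
    rw [runs_cons, List.map_cons, ← ih]
    rcases runs w with _ | ⟨⟨j, cs⟩, rs⟩
    · rfl
    · by_cases h : p.2 = j <;> simp [consRun, h]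

theorem ne_nil_of_mem_runs {w : List (A × ι)} {r : ι × List A} (hr : r ∈ runs w) :
    r.2 ≠ [] := by
  induction w with
  | nil => simp at hr
  | cons p w ih =>
    rw [runs_cons] at hr
    rcases hrs : runs w with _ | ⟨⟨j, cs⟩, rs⟩ <;> rw [hrs] at hr ih
    · simp_all [consRun]
    · by_cases h : p.2 = j <;> simp [consRun, h] at hr <;> grind

theorem isChain_map_fst_runs (w : List (A × ι)) :
    ((runs w).map Prod.fst).IsChain (· ≠ ·) := by
  induction w with
  | nil => exact List.IsChain.nil
  | cons p w ih =>
    rw [runs_cons]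
    rcases hrs : runs w with _ | ⟨⟨j, cs⟩, rs⟩
    · simp [consRun]
    · rw [hrs] at ih
      by_cases h : p.2 = j <;> simpa [consRun, h] using ih

theorem map_snd_runs_eq_of_sameRunStructure {w w' : List (A × ι)}
    (hcoef : w.map Prod.fst = w'.map Prod.fst)
    (hrun : SameRunStructure (w.map Prod.snd) (w'.map Prod.snd)) :
    (runs w).map Prod.snd = (runs w').map Prod.snd := by
  induction w generalizing w' with
  | nil =>
    obtain rfl : w' = [] := by simpa using hcoef.symm
    rfl
  | cons p u ih =>
    obtain ⟨p', u', rfl⟩ : ∃ p' u', w' = p' :: u' :=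
      List.exists_cons_of_ne_nil (by rintro rfl; simp at hcoef)
    simp only [List.map_cons, List.cons.injEq] at hcoef
    obtain ⟨hb, hcoef⟩ := hcoef
    obtain ⟨b, i⟩ := p
    obtain ⟨b', i'⟩ := p'
    subst hb
    rcases u with _ | ⟨⟨c, j⟩, u⟩ <;> rcases u' with _ | ⟨⟨c', j'⟩, u'⟩
    · rfl
    · simp at hcoef
    · simp at hcoef
    · obtain ⟨hij, hrun⟩ := hrun
      have ih := ih hcoef hrun
      simp only [runs_cons] at ih ⊢
      obtain ⟨cs, rs, hrs⟩ := exists_consRun_eq_cons c j (runs u)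
      obtain ⟨cs', rs', hrs'⟩ := exists_consRun_eq_cons c' j' (runs u')
      rw [hrs, hrs'] at ih ⊢
      by_cases h : i = j <;> simp_all [consRun]

end Runs

section Expectation

variable {A ι : Type*} [Ring A] [Algebra ℂ A]

def wordEval (x : ι → A) (w : List (A × ι)) : A :=
  (w.map fun p => p.1 * x p.2).prod

/-- The monomial `c₁ X c₂ X ⋯ c_r X 1` for `cs = [c₁, …, c_r]`. -/
def runPoly (cs : List A) : List (ℂ × List A) :=
  [(1, cs ++ [1])]

theorem polyEval_runPoly_cons (y b : A) (cs : List A) :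
    polyEval y (runPoly (b :: cs)) = b * y * polyEval y (runPoly cs) := by
  cases cs <;> simp [polyEval, runPoly, monEval]

theorem polyEval_runPoly_nil (y : A) : polyEval y (runPoly []) = 1 := by
  simp [polyEval, runPoly, monEval]

theorem isPoly₀_runPoly (B : NonUnitalSubalgebra ℂ A) {cs : List A} (hcs : cs ≠ [])
    (hB : ∀ c ∈ cs, c ∈ B ∨ ∃ lam : ℂ, c = lam • (1 : A)) :
    IsPoly₀ B (runPoly cs) := by
  intro q hq
  rw [runPoly, List.mem_singleton] at hq
  subst hq
  refine ⟨by simpa [Nat.succ_le_iff, List.length_pos_iff] using hcs, fun c hc => ?_⟩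
  rcases List.mem_append.mp hc with hc | hc
  · exact hB c hc
  · exact Or.inr ⟨1, by simpa using hc⟩

theorem BoolIndep.expectation_list_prod {B : NonUnitalSubalgebra ℂ A} {E : A →ₗ[ℂ] A}
    {x : ι → A} (hbool : BoolIndep B E x) {κ : Type*} (idx : κ → ι)
    (p : κ → List (ℂ × List A)) {L : List κ} (hL : L ≠ [])
    (hchain : (L.map idx).IsChain (· ≠ ·))
    (hp : ∀ r ∈ L, IsPoly₀ B (p r)) :
    E ((L.map fun r => polyEval (x (idx r)) (p r)).prod) =
      (L.map fun r => E (polyEval (x (idx r)) (p r))).prod := by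
  obtain ⟨k, hk⟩ : ∃ k, L.length = k + 1 := Nat.exists_eq_succ_of_ne_zero (by simpa using hL)
  have key := hbool k (fun t => idx L[t.cast hk.symm])
    (fun t => by
      have := hchain.getElem t (by simp; omega)
      rwa [List.getElem_map, List.getElem_map] at this)
    (fun t => p L[t.cast hk.symm]) (fun t => hp _ (List.getElem_mem _))
  have hofFn : ∀ {β : Type _} (g : κ → β),
      List.ofFn (fun t : Fin (k + 1) => g L[t.cast hk.symm]) = L.map g := fun g => by
    rw [← List.ofFn_getElem_eq_map, List.ofFn_congr hk]
    rfl
  rwa [hofFn (fun r => polyEval (x (idx r)) (p r)),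
    hofFn (fun r => E (polyEval (x (idx r)) (p r)))] at key

variable [DecidableEq ι]

theorem wordEval_eq_prod_runs (x : ι → A) (w : List (A × ι)) :
    wordEval x w = ((runs w).map fun r => polyEval (x r.1) (runPoly r.2)).prod := by
  induction w with
  | nil => rfl
  | cons p w ih =>
    obtain ⟨b, i⟩ := p
    rw [runs_cons]
    unfold wordEval at ih ⊢
    rw [List.map_cons, List.prod_cons, ih]
    rcases runs w with _ | ⟨⟨j, cs⟩, rs⟩
    · simp [consRun, polyEval_runPoly_cons, polyEval_runPoly_nil]
    · by_cases h : i = j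
      · subst h; simp [consRun, polyEval_runPoly_cons, mul_assoc]
      · simp [consRun, h, polyEval_runPoly_cons, polyEval_runPoly_nil, mul_assoc]

theorem expectation_wordEval_eq_prod_runs {B : NonUnitalSubalgebra ℂ A} {E : A →ₗ[ℂ] A}
    {x : ι → A} (hid : IdentDistrib' B E x) (hbool : BoolIndep B E x) (i₀ : ι)
    {w : List (A × ι)} (hw : w ≠ [])
    (hB : ∀ p ∈ w, p.1 ∈ B ∨ ∃ lam : ℂ, p.1 = lam • (1 : A)) :
    E (wordEval x w) =
      (((runs w).map Prod.snd).map fun cs => E (polyEval (x i₀) (runPoly cs))).prod := by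
  have hpoly : ∀ r ∈ runs w, IsPoly₀ B (runPoly r.2) := fun r hr =>
    isPoly₀_runPoly B (ne_nil_of_mem_runs hr) fun c hc => by
      have hcw : c ∈ w.map Prod.fst := by
        rw [← flatten_map_snd_runs]
        exact List.mem_flatten_of_mem (List.mem_map_of_mem hr) hc
      obtain ⟨p, hp, rfl⟩ := List.mem_map.mp hcw
      exact hB p hp
  rw [wordEval_eq_prod_runs, hbool.expectation_list_prod Prod.fst (fun r => runPoly r.2)
    (runs_ne_nil hw) (isChain_map_fst_runs w) hpoly, List.map_map]
  exact congrArg List.prod (List.map_congr_left fun r hr => hid _ _ _ (hpoly r hr))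

end Expectation

theorem stmt4_general {A : Type*} [Ring A] [Algebra ℂ A] (B : NonUnitalSubalgebra ℂ A)
    (E : A →ₗ[ℂ] A)
    (n : ℕ) (x : Fin n → A)
    (hid : IdentDistrib' B E x) (hbool : BoolIndep B E x)
    (k : ℕ) (i j : Fin (k + 1) → Fin n)
    (hrun : ∀ t : Fin k, (i t.castSucc = i t.succ ↔ j t.castSucc = j t.succ))
    (b : Fin k → A) (hb : ∀ t, b t ∈ B ∨ b t = 1) :
    E (x (i 0) * (List.ofFn fun t : Fin k => b t * x (i t.succ)).prod) =
      E (x (j 0) * (List.ofFn fun t : Fin k => b t * x (j t.succ)).prod) := by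
  let c : Fin (k + 1) → A := Fin.cons 1 b
  let word : (Fin (k + 1) → Fin n) → List (A × Fin n) := fun i => List.ofFn fun t => (c t, i t)
  have hword : ∀ i : Fin (k + 1) → Fin n,
      x (i 0) * (List.ofFn fun t : Fin k => b t * x (i t.succ)).prod = wordEval x (word i) := by
    intro i
    simp [word, c, wordEval, List.map_ofFn, List.ofFn_succ, Function.comp_def]
  have hc : ∀ t, c t ∈ B ∨ ∃ lam : ℂ, c t = lam • (1 : A) := by
    refine Fin.cases (Or.inr ⟨1, (one_smul ℂ 1).symm⟩) fun t => ?_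
    rcases hb t with h | h
    · exact Or.inl h
    · exact Or.inr ⟨1, by simp [c, h]⟩
  have hB : ∀ i, ∀ p ∈ word i, p.1 ∈ B ∨ ∃ lam : ℂ, p.1 = lam • (1 : A) := by
    intro i p hp
    obtain ⟨t, rfl⟩ := List.mem_ofFn.mp hp
    exact hc t
  have hne : ∀ i, word i ≠ [] := fun i => by simp [word]
  rw [hword i, hword j, expectation_wordEval_eq_prod_runs hid hbool (i 0) (hne i) (hB i),
    expectation_wordEval_eq_prod_runs hid hbool (i 0) (hne j) (hB j),
    map_snd_runs_eq_of_sameRunStructure (w := word i) (w' := word j)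
      (by simp only [word, List.map_ofFn]; rfl)
      (by simp only [word, List.map_ofFn]; exact sameRunStructure_ofFn i j hrun)]

/-- If `(x_i)` is identically distributed and boolean independent over `B` w.r.t. `E`, and the
tuples `(i₀,…,i_k)` and `(j₀,…,j_k)` have the same run structure, then for every choice of
`b_t ∈ B ∪ {1}`,
`E[x_{i₀} b₁ x_{i₁} ⋯ b_k x_{i_k}] = E[x_{j₀} b₁ x_{j₁} ⋯ b_k x_{j_k}]`. -/
theorem stmt4 {A : Type*} [Ring A] [Algebra ℂ A] (B : NonUnitalSubalgebra ℂ A)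
    (E : A →ₗ[ℂ] A)
    (hrange : ∀ a : A, E a ∈ B)
    (hbimod : ∀ b₁ ∈ B, ∀ b₂ ∈ B, ∀ a : A, E (b₁ * a * b₂) = b₁ * E a * b₂)
    (n : ℕ) (x : Fin n → A)
    (hid : IdentDistrib' B E x) (hbool : BoolIndep B E x)
    (k : ℕ) (i j : Fin (k + 1) → Fin n)
    (hrun : ∀ t : Fin k, (i t.castSucc = i t.succ ↔ j t.castSucc = j t.succ))
    (b : Fin k → A) (hb : ∀ t, b t ∈ B ∨ b t = 1) :
    E (x (i 0) * (List.ofFn fun t : Fin k => b t * x (i t.succ)).prod) =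
      E (x (j 0) * (List.ofFn fun t : Fin k => b t * x (j t.succ)).prod) :=
  stmt4_general B E n x hid hbool k i j hrun b hb
end

section
/- Let (A, B, E) be an operator-valued probability space with A unital, let (x_i)_{i=1,…,n} be identically distributed and boolean independent over B with respect to E, and let φ₀ be a linear functional on B. Then the joint distribution of (x₁,…,x_n) is invariant under the linear coaction of the boolean permutation quantum semigroup 𝓑_s(n): for every unital C*-algebra C, every family (u_{ij}, P) of elements of C satisfying the 𝓑_s(n) relations, every k ≥ 1 and all i₁,…,i_k ∈ {1,…,n}: Σ_{j₁,…,j_k=1}^n φ₀(E[x_{j₁}·x_{j₂}⋯x_{j_k}])·(P·u_{j₁i₁}·u_{j₂i₂}⋯u_{j_k i_k}·P) = φ₀(E[x_{i₁}·x_{i₂}⋯x_{i_k}])·P. -/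
/-- The family `(u_{ij}, P)` satisfies the defining relations of the boolean permutation
quantum semigroup `𝓑_s(n)`. -/
def BsRel {C : Type*} [Ring C] [StarRing C] {n : ℕ} (u : Fin n → Fin n → C) (P : C) : Prop :=
  (∀ i j, star (u i j) = u i j) ∧
  (∀ i j, u i j * u i j = u i j) ∧
  (∀ i k l, k ≠ l → u i k * u i l = 0) ∧
  (∀ i k l, k ≠ l → u k i * u l i = 0) ∧
  star P = P ∧ P * P = P ∧
  (∀ i, (∑ k, u k i) * P = P)


namespace List

variable {α β : Type*} [DecidableEq α] [DecidableEq β]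

/-- Run-length encoding: the pair `(a, m)` stands for a run of `m + 1` copies of `a`. -/
def runs : List α → List (α × ℕ)
  | [] => []
  | a :: l =>
    match runs l with
    | [] => [(a, 0)]
    | (b, m) :: r => if a = b then (b, m + 1) :: r else (a, 0) :: (b, m) :: r

theorem runs_cons_of_runs_eq {a b : α} {l : List α} {m : ℕ} {r : List (α × ℕ)}
    (h : runs l = (b, m) :: r) :
    runs (a :: l) = if a = b then (b, m + 1) :: r else (a, 0) :: (b, m) :: r := by
  rw [runs, h]

theorem exists_runs_cons (a : α) (l : List α) : ∃ m r, runs (a :: l) = (a, m) :: r := by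
  rcases h : runs l with _ | ⟨⟨b, m⟩, r⟩
  · exact ⟨0, [], by rw [runs, h]⟩
  · rw [runs_cons_of_runs_eq h]
    by_cases hab : a = b
    · exact ⟨m + 1, r, by simp [hab]⟩
    · exact ⟨0, (b, m) :: r, by simp [hab]⟩

theorem runs_ne_nil {l : List α} (hl : l ≠ []) : runs l ≠ [] := by
  obtain ⟨a, l, rfl⟩ := exists_cons_of_ne_nil hl
  obtain ⟨m, r, h⟩ := exists_runs_cons a l
  simp [h]

theorem isChain_runs : ∀ l : List α, (runs l).IsChain fun p q => p.1 ≠ q.1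
  | [] => .nil
  | [_] => .singleton _
  | a :: b :: l => by
    obtain ⟨m, r, h⟩ := exists_runs_cons b l
    have ih := isChain_runs (b :: l)
    rw [h] at ih
    rw [runs_cons_of_runs_eq h]
    split_ifs with hab
    · exact ih.imp_head (x := (b, m)) (y := (b, m + 1)) id
    · exact ih.cons_cons hab

theorem prod_map_runs {M : Type*} [Monoid M] (f : α → M) :
    ∀ l : List α, ((runs l).map fun q => f q.1 ^ (q.2 + 1)).prod = (l.map f).prod
  | [] => rfl
  | [a] => by simp [runs]
  | a :: b :: l => by
    obtain ⟨m, r, h⟩ := exists_runs_cons b l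
    have ih := prod_map_runs f (b :: l)
    rw [h] at ih
    rw [runs_cons_of_runs_eq h, map_cons, prod_cons, ← ih]
    split_ifs with hab
    · simp [hab, pow_succ', mul_assoc]
    · simp

theorem runs_map (f : α → β) :
    ∀ {l : List α}, (l.IsChain fun a b => f a = f b ↔ a = b) →
      runs (l.map f) = (runs l).map (Prod.map f id)
  | [], _ => rfl
  | [a], _ => rfl
  | a :: b :: l, hl => by
    rw [isChain_cons_cons] at hl
    obtain ⟨m, r, h⟩ := exists_runs_cons b l
    have ih : runs (f b :: l.map f) = (f b, m) :: r.map (Prod.map f id) := by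
      rw [← map_cons, runs_map f hl.2, h]; rfl
    rw [map_cons, map_cons, runs_cons_of_runs_eq ih, runs_cons_of_runs_eq h]
    by_cases hab : a = b
    · simp [hab]
    · simp [hab, hl.1.not.mpr hab]

theorem prod_eq_zero_of_not_isChain_mul_ne_zero {M : Type*} [MonoidWithZero M] :
    ∀ {l : List M}, ¬ l.IsChain (fun a b => a * b ≠ 0) → l.prod = 0
  | [], h => absurd .nil h
  | [_], h => absurd (.singleton _) h
  | a :: b :: l, h => by
    rw [isChain_cons_cons, not_and_or, not_not] at h
    rcases h with hab | h
    · rw [prod_cons, prod_cons, ← mul_assoc, hab, zero_mul]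
    · rw [prod_cons, prod_eq_zero_of_not_isChain_mul_ne_zero h, mul_zero]

theorem prod_mul_eq_of_forall_mul_eq {M : Type*} [Monoid M] {P : M} :
    ∀ {l : List M}, (∀ s ∈ l, s * P = P) → l.prod * P = P
  | [], _ => one_mul P
  | s :: l, h => by
    rw [prod_cons, mul_assoc, prod_mul_eq_of_forall_mul_eq fun t ht => h t (mem_cons_of_mem s ht),
      h s mem_cons_self]

theorem sum_prod_ofFn {R ι : Type*} [Semiring R] [Fintype ι] :
    ∀ {k : ℕ} (f : Fin k → ι → R),
      ∑ j : Fin k → ι, (ofFn fun t => f t (j t)).prod = (ofFn fun t => ∑ a, f t a).prod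
  | 0, f => by simp
  | k + 1, f => by
    rw [← (Fin.consEquiv fun _ => ι).sum_comp, Fintype.sum_prod_type]
    simp [ofFn_succ, Fin.consEquiv, ← Finset.mul_sum, ← Finset.sum_mul, sum_prod_ofFn]

end List

theorem monEval_replicate_one {A : Type*} [Monoid A] (y : A) :
    ∀ m : ℕ, monEval y (List.replicate (m + 2) 1) = y ^ (m + 1)
  | 0 => by simp [monEval]
  | m + 1 => by
    rw [List.replicate_succ, List.replicate_succ, monEval, ← List.replicate_succ,
      monEval_replicate_one y m, one_mul, pow_succ' y (m + 1)]

section Moments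

variable {A : Type*} [Ring A] [Algebra ℂ A] {B : NonUnitalSubalgebra ℂ A} {E : A →ₗ[ℂ] A}
  {ι : Type*} {x : ι → A}

/-- The polynomial `X^(m+1)`, written as the monomial `1 X 1 ⋯ X 1`. -/
def powPoly (A : Type*) [One A] (m : ℕ) : List (ℂ × List A) :=
  [(1, List.replicate (m + 2) 1)]

theorem polyEval_powPoly (y : A) (m : ℕ) : polyEval y (powPoly A m) = y ^ (m + 1) := by
  simp [polyEval, powPoly, monEval_replicate_one]

theorem isPoly₀_powPoly (B : NonUnitalSubalgebra ℂ A) (m : ℕ) : IsPoly₀ B (powPoly A m) := by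
  simp only [IsPoly₀, powPoly, List.mem_singleton, forall_eq, List.length_replicate,
    List.mem_replicate]
  exact ⟨by omega, fun b hb => .inr ⟨1, by rw [hb.2, one_smul]⟩⟩

theorem IdentDistrib'.apply_pow_eq (hid : IdentDistrib' B E x) (i j : ι) (m : ℕ) :
    E (x i ^ (m + 1)) = E (x j ^ (m + 1)) := by
  simpa only [polyEval_powPoly] using hid i j (powPoly A m) (isPoly₀_powPoly B m)

theorem BoolIndep.apply_prod_map_polyEval (hbool : BoolIndep B E x)
    {ps : List (ι × List (ℂ × List A))} (hne : ps ≠ [])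
    (hchain : ps.IsChain fun p q => p.1 ≠ q.1) (hpoly : ∀ q ∈ ps, IsPoly₀ B q.2) :
    E (ps.map fun q => polyEval (x q.1) q.2).prod =
      (ps.map fun q => E (polyEval (x q.1) q.2)).prod := by
  obtain ⟨a, l, rfl⟩ := List.exists_cons_of_ne_nil hne
  obtain ⟨g, hg⟩ : ∃ g : Fin (l.length + 1) → ι × List (ℂ × List A), List.ofFn g = a :: l :=
    ⟨Fin.cons a l.get, by rw [List.ofFn_cons, List.ofFn_get]⟩
  rw [← hg] at hchain hpoly ⊢
  simp only [List.map_ofFn]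
  exact hbool _ (fun t => (g t).1) (fun t => List.isChain_ofFn.1 hchain t (Nat.succ_lt_succ t.2))
    (fun t => (g t).2) (fun t => hpoly _ (List.mem_ofFn.2 ⟨t, rfl⟩))

theorem BoolIndep.apply_prod_map_pow (hbool : BoolIndep B E x) {bs : List (ι × ℕ)} (hne : bs ≠ [])
    (hchain : bs.IsChain fun p q => p.1 ≠ q.1) :
    E (bs.map fun q => x q.1 ^ (q.2 + 1)).prod = (bs.map fun q => E (x q.1 ^ (q.2 + 1))).prod := by
  have := hbool.apply_prod_map_polyEval (ps := bs.map fun q => (q.1, powPoly A q.2))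
    (by simpa using hne) ((List.isChain_map _).2 hchain)
    (by simp only [List.mem_map]; rintro _ ⟨q, -, rfl⟩; exact isPoly₀_powPoly B q.2)
  simpa [Function.comp_def, polyEval_powPoly] using this

variable [DecidableEq ι] {κ : Type*} [DecidableEq κ]

theorem apply_prod_map_eq_prod_runs (hbool : BoolIndep B E x) (hid : IdentDistrib' B E x) (i₀ : ι)
    {l : List κ} (hl : l ≠ []) (f : κ → ι) (hf : l.IsChain fun a b => f a = f b ↔ a = b) :
    E (l.map (x ∘ f)).prod = ((l.runs).map fun q => E (x i₀ ^ (q.2 + 1))).prod := by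
  calc E (l.map (x ∘ f)).prod
      = E ((l.map f).runs.map fun q => x q.1 ^ (q.2 + 1)).prod := by
        rw [List.prod_map_runs, List.map_map]
    _ = ((l.map f).runs.map fun q => E (x q.1 ^ (q.2 + 1))).prod :=
        hbool.apply_prod_map_pow (List.runs_ne_nil (by simpa using hl)) (List.isChain_runs _)
    _ = _ := by simp [List.runs_map f hf, Function.comp_def, hid.apply_pow_eq _ i₀]

theorem apply_prod_map_fst_eq_snd (hbool : BoolIndep B E x) (hid : IdentDistrib' B E x)
    {p : List (ι × ι)} (hp : p.IsChain fun a b => (a.1 = b.1 ↔ a.2 = b.2)) :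
    E (p.map (x ∘ Prod.fst)).prod = E (p.map (x ∘ Prod.snd)).prod := by
  rcases eq_or_ne p [] with rfl | hne
  · rfl
  have i₀ := (p.head hne).1
  rw [apply_prod_map_eq_prod_runs hbool hid i₀ hne _ (hp.imp fun a b h => by grind),
    apply_prod_map_eq_prod_runs hbool hid i₀ hne _ (hp.imp fun a b h => by grind)]

end Moments

theorem fst_eq_iff_snd_eq_of_mul_ne_zero {C ι : Type*} [MulZeroClass C] {u : ι → ι → C}
    (hrow : ∀ i k l, k ≠ l → u i k * u i l = 0) (hcol : ∀ i k l, k ≠ l → u k i * u l i = 0)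
    {a b : ι × ι} (h : u a.1 a.2 * u b.1 b.2 ≠ 0) : a.1 = b.1 ↔ a.2 = b.2 := by
  obtain ⟨a₁, a₂⟩ := a
  obtain ⟨b₁, b₂⟩ := b
  constructor
  · rintro rfl
    by_contra hne
    exact h (hrow a₁ a₂ b₂ hne)
  · rintro rfl
    by_contra hne
    exact h (hcol a₂ a₁ b₁ hne)

theorem sum_mul_prod_ofFn_mul_eq_self {C ι : Type*} [Semiring C] [Fintype ι] {k : ℕ}
    (u : ι → ι → C) {P : C} (hsum : ∀ i, (∑ a, u a i) * P = P) (hPP : P * P = P)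
    (i : Fin k → ι) :
    ∑ j : Fin k → ι, P * (List.ofFn fun t => u (j t) (i t)).prod * P = P := by
  rw [← Finset.sum_mul, ← Finset.mul_sum, List.sum_prod_ofFn fun t a => u a (i t), mul_assoc,
    List.prod_mul_eq_of_forall_mul_eq, hPP]
  simpa [List.mem_ofFn] using fun t => hsum (i t)

theorem stmt5_general {A : Type*} [Ring A] [Algebra ℂ A] (B : NonUnitalSubalgebra ℂ A)
    (E : A →ₗ[ℂ] A)
    (hrange : ∀ a : A, E a ∈ B)
    (φ₀ : B →ₗ[ℂ] ℂ)
    (n : ℕ) (x : Fin n → A)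
    (hid : IdentDistrib' B E x) (hbool : BoolIndep B E x)
    (C : Type*) [NormedRing C] [StarRing C] [NormedAlgebra ℂ C]
    (u : Fin n → Fin n → C) (P : C) (hu : BsRel u P)
    (k : ℕ) (i : Fin (k + 1) → Fin n) :
    ∑ j : Fin (k + 1) → Fin n,
        φ₀ ⟨E ((List.ofFn fun t => x (j t)).prod), hrange _⟩ •
          (P * (List.ofFn fun t => u (j t) (i t)).prod * P) =
      φ₀ ⟨E ((List.ofFn fun t => x (i t)).prod), hrange _⟩ • P := by
  obtain ⟨-, -, hrow, hcol, -, hPP, hsum⟩ := hu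
  conv_rhs => rw [← sum_mul_prod_ofFn_mul_eq_self u hsum hPP i, Finset.smul_sum]
  refine Finset.sum_congr rfl fun j _ => ?_
  by_cases hU : (List.ofFn fun t => u (j t) (i t)).IsChain (· * · ≠ 0)
  · have hE := apply_prod_map_fst_eq_snd hbool hid (p := List.ofFn fun t => (j t, i t))
      (List.isChain_ofFn.2 fun t ht =>
        fst_eq_iff_snd_eq_of_mul_ne_zero hrow hcol (List.isChain_ofFn.1 hU t ht))
    simp only [List.map_ofFn, Function.comp_def] at hE
    simp only [hE]
  · rw [List.prod_eq_zero_of_not_isChain_mul_ne_zero hU, mul_zero, zero_mul, smul_zero, smul_zero]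

/-- If `(x₁,…,x_n)` is identically distributed and boolean independent over `B` w.r.t. `E`,
and `φ₀` is a linear functional on `B`, then the joint distribution of `(x₁,…,x_n)` with
respect to `φ₀ ∘ E` is invariant under the linear coaction of `𝓑_s(n)`. -/
theorem stmt5 {A : Type*} [Ring A] [Algebra ℂ A] (B : NonUnitalSubalgebra ℂ A)
    (E : A →ₗ[ℂ] A)
    (hrange : ∀ a : A, E a ∈ B)
    (hbimod : ∀ b₁ ∈ B, ∀ b₂ ∈ B, ∀ a : A, E (b₁ * a * b₂) = b₁ * E a * b₂)
    (φ₀ : B →ₗ[ℂ] ℂ)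
    (n : ℕ) (x : Fin n → A)
    (hid : IdentDistrib' B E x) (hbool : BoolIndep B E x)
    (C : Type*) [NormedRing C] [StarRing C] [CStarRing C] [NormedAlgebra ℂ C]
    [CompleteSpace C]
    (u : Fin n → Fin n → C) (P : C) (hu : BsRel u P)
    (k : ℕ) (i : Fin (k + 1) → Fin n) :
    ∑ j : Fin (k + 1) → Fin n,
        φ₀ ⟨E ((List.ofFn fun t => x (j t)).prod), hrange _⟩ •
          (P * (List.ofFn fun t => u (j t) (i t)).prod * P) =
      φ₀ ⟨E ((List.ofFn fun t => x (i t)).prod), hrange _⟩ • P :=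
  stmt5_general B E hrange φ₀ n x hid hbool C u P hu k i
end

section
/- Let A be a (not necessarily unital) complex associative algebra, B a subalgebra of A, and E : A → B a linear map satisfying E[b₁ a b₂] = b₁ E[a] b₂ for all b₁, b₂ ∈ B and a ∈ A, and E[b] = b for all b ∈ B. Let (A_i)_{i∈I} be a family of subalgebras of A with B ⊆ A_i for every i, which is boolean independent with respect to E: E[a₁·a₂⋯a_k] = E[a₁]·E[a₂]⋯E[a_k] whenever a_t ∈ A_{i_t} and consecutive indices satisfy i₁ ≠ i₂, i₂ ≠ i₃, …, i_{k−1} ≠ i_k. Form the unitization Ā = ℂ·1 ⊕ A (with multiplication (λ·1 + a)(μ·1 + b) = λμ·1 + λb + μa + ab) and define Ē : Ā → B̄ := ℂ·1 ⊕ B by Ē[λ·1 + a] = λ·1 + E[a]. Then the unital subalgebras Ā_i := ℂ·1 ⊕ A_i of Ā are freely independent over B̄ with respect to Ē: for every k ≥ 1, every tuple i₁,…,i_k ∈ I with consecutive entries distinct, and all ȳ_t ∈ Ā_{i_t} with Ē[ȳ_t] = 0 for all t, one has Ē[ȳ₁·ȳ₂⋯ȳ_k] = 0. -/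
/-- Ordered product `a 0 * a 1 * ⋯ * a k` of a nonempty tuple in a (possibly non-unital)
multiplicative structure. -/
def nprod {A : Type*} [Mul A] : {k : ℕ} → (Fin (k + 1) → A) → A
  | 0, a => a 0
  | _ + 1, a => a 0 * nprod fun t => a t.succ

/-- The canonical extension `Ē` of `E : A → B ⊆ A` to the unitization
`Ā = ℂ·1 ⊕ A`, given by `Ē[λ·1 + a] = λ·1 + E[a]`. -/
noncomputable def Ebar {A : Type*} [NonUnitalRing A] [Module ℂ A]
    [SMulCommClass ℂ A A] [IsScalarTower ℂ A A]
    (E : A →ₗ[ℂ] A) (y : Unitization ℂ A) : Unitization ℂ A :=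
  algebraMap ℂ (Unitization ℂ A) y.fst + Unitization.inr (E y.snd)

/-! An `Ē`-centered element `λ·1 + a` has `λ = 0` and `E[a] = 0`. Hence a product of centered
elements is the image of the product of their `A`-components, boolean independence turns `E`
of that product into the product of the `E`-values, and this vanishes because its first
factor does. -/

theorem map_nprod {F M N : Type*} [Mul M] [Mul N] [FunLike F M N] [MulHomClass F M N]
    (f : F) : ∀ {k : ℕ} (a : Fin (k + 1) → M), f (nprod a) = nprod fun t => f (a t)
  | 0, _ => rfl
  | _ + 1, a => by rw [nprod, map_mul, map_nprod f fun t => a t.succ, nprod]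

theorem nprod_eq_zero_of_head_eq_zero {M : Type*} [MulZeroClass M] :
    ∀ {k : ℕ} (a : Fin (k + 1) → M), a 0 = 0 → nprod a = 0
  | 0, _, h => h
  | _ + 1, _, h => by rw [nprod, h, zero_mul]

section Ebar

variable {A : Type*} [NonUnitalRing A] [Module ℂ A] [SMulCommClass ℂ A A] [IsScalarTower ℂ A A]
  (E : A →ₗ[ℂ] A)

@[simp]
theorem Ebar_fst (y : Unitization ℂ A) : (Ebar E y).fst = y.fst := by
  simp [Ebar, Unitization.algebraMap_eq_inl]

@[simp]
theorem Ebar_snd (y : Unitization ℂ A) : (Ebar E y).snd = E y.snd := by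
  simp [Ebar, Unitization.algebraMap_eq_inl]

theorem Ebar_inr (a : A) : Ebar E (a : Unitization ℂ A) = (E a : Unitization ℂ A) := by
  ext <;> simp

theorem Ebar_eq_zero_iff {y : Unitization ℂ A} : Ebar E y = 0 ↔ y.fst = 0 ∧ E y.snd = 0 := by
  simp [Unitization.ext_iff]

theorem eq_inr_snd_of_Ebar_eq_zero {y : Unitization ℂ A} (hy : Ebar E y = 0) :
    y = (y.snd : Unitization ℂ A) :=
  Unitization.ext ((Ebar_eq_zero_iff E).1 hy).1 rfl

end Ebar

theorem stmt7_general {A : Type*} [NonUnitalRing A] [Module ℂ A]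
    [SMulCommClass ℂ A A] [IsScalarTower ℂ A A]
    (E : A →ₗ[ℂ] A)
    {ι : Type*} (Ai : ι → NonUnitalSubalgebra ℂ A)
    (hbool : ∀ (k : ℕ) (idx : Fin (k + 1) → ι),
      (∀ t : Fin k, idx t.castSucc ≠ idx t.succ) →
      ∀ a : Fin (k + 1) → A, (∀ t, a t ∈ Ai (idx t)) →
        E (nprod a) = nprod fun t => E (a t)) :
    ∀ (k : ℕ) (idx : Fin (k + 1) → ι),
      (∀ t : Fin k, idx t.castSucc ≠ idx t.succ) →
      ∀ y : Fin (k + 1) → Unitization ℂ A,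
        (∀ t, (y t).snd ∈ Ai (idx t)) →
        (∀ t, Ebar E (y t) = 0) →
        Ebar E (nprod y) = 0 := by
  intro k idx hne y hmem hcent
  have hprod : nprod y = (nprod fun t => (y t).snd : A) := by
    conv_lhs => rw [funext fun t => eq_inr_snd_of_Ebar_eq_zero E (hcent t)]
    exact (map_nprod (Unitization.inrNonUnitalAlgHom ℂ A) _).symm
  rw [hprod, Ebar_inr, hbool k idx hne _ hmem,
    nprod_eq_zero_of_head_eq_zero _ ((Ebar_eq_zero_iff E).1 (hcent 0)).2,
    Unitization.inr_zero]

/-- If the subalgebras `(A_i)` (each containing `B`) are boolean independent over `B` with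
respect to `E`, then the unital subalgebras `Ā_i = ℂ·1 ⊕ A_i` of the unitization
`Ā = ℂ·1 ⊕ A` are freely independent over `B̄ = ℂ·1 ⊕ B` with respect to `Ē`:
any ordered product of `Ē`-centered elements from the `Ā_i`, with consecutive indices
distinct, is mapped to `0` by `Ē`.  (An element `ȳ = λ·1 + a` lies in `Ā_i` iff its
`A`-component `a` lies in `A_i`.) -/
theorem stmt7 {A : Type*} [NonUnitalRing A] [Module ℂ A]
    [SMulCommClass ℂ A A] [IsScalarTower ℂ A A]
    (B : NonUnitalSubalgebra ℂ A) (E : A →ₗ[ℂ] A)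
    (hrange : ∀ a : A, E a ∈ B)
    (hbimod : ∀ b₁ ∈ B, ∀ b₂ ∈ B, ∀ a : A, E (b₁ * a * b₂) = b₁ * E a * b₂)
    (hid : ∀ b ∈ B, E b = b)
    {ι : Type*} (Ai : ι → NonUnitalSubalgebra ℂ A) (hBA : ∀ i, B ≤ Ai i)
    (hbool : ∀ (k : ℕ) (idx : Fin (k + 1) → ι),
      (∀ t : Fin k, idx t.castSucc ≠ idx t.succ) →
      ∀ a : Fin (k + 1) → A, (∀ t, a t ∈ Ai (idx t)) →
        E (nprod a) = nprod fun t => E (a t)) :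
    ∀ (k : ℕ) (idx : Fin (k + 1) → ι),
      (∀ t : Fin k, idx t.castSucc ≠ idx t.succ) →
      ∀ y : Fin (k + 1) → Unitization ℂ A,
        (∀ t, (y t).snd ∈ Ai (idx t)) →
        (∀ t, Ebar E (y t) = 0) →
        Ebar E (nprod y) = 0 :=
  stmt7_general E Ai hbool
end
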